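/- arXiv:1911.06696 — 4 statements merged into one kernel-verified Lean document; each statement's English description precedes it below -/
import Mathlib

section
/- Let D > 0 and X > 0 be real numbers, let n ≥ 1, and let S̄, S*, T* ∈ ℝ^n with S̄_i ≥ 0, S*_i ≥ 0 and T*_i ≥ 0 for all i, let ν* ∈ ℝ^n, and let V_i > 0 and K_i > 0 for all i. Suppose that for every index i in a set I of 'imported' substrates, D(S̄_i − S*_i) = X ν*_i and 0 ≤ D(S̄_i − S*_i) ≤ X · (V_i S*_i / (K_i + S*_i)) · T*_i. Then for every i ∈ I: if S̄_i = 0 then S*_i = 0, and if S̄_i > 0 then 0 < S*_i ≤ S̄_i. -/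
/-- Proposition 1: for an imported substrate, if the inflow concentration is
zero then the medium concentration is zero, and if it is positive then the
medium concentration lies in (0, S̄_i]. -/
theorem chemostat_rba_import_bounds
    (n : ℕ) (hn : 1 ≤ n) (D X : ℝ) (hD : 0 < D) (hX : 0 < X)
    (Sbar Sstar Tstar : Fin n → ℝ) (ν V K : Fin n → ℝ)
    (hSbar : ∀ i, 0 ≤ Sbar i) (hSstar : ∀ i, 0 ≤ Sstar i)
    (hTstar : ∀ i, 0 ≤ Tstar i)
    (hV : ∀ i, 0 < V i) (hK : ∀ i, 0 < K i)
    (I : Set (Fin n))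
    (heq : ∀ i ∈ I, D * (Sbar i - Sstar i) = X * ν i)
    (hineq : ∀ i ∈ I, 0 ≤ D * (Sbar i - Sstar i) ∧
      D * (Sbar i - Sstar i) ≤ X * (V i * Sstar i / (K i + Sstar i)) * Tstar i) :
    ∀ i ∈ I, (Sbar i = 0 → Sstar i = 0) ∧
      (0 < Sbar i → 0 < Sstar i ∧ Sstar i ≤ Sbar i) := by
  intro i hi
  obtain ⟨h1, h2⟩ := hineq i hi
  have hle : Sstar i ≤ Sbar i := by nlinarith
  refine ⟨fun h0 => le_antisymm (h0 ▸ hle) (hSstar i), fun hpos => ⟨?_, hle⟩⟩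
  rcases lt_or_eq_of_le (hSstar i) with h | h
  · exact h
  · exfalso
    have hz : X * (V i * Sstar i / (K i + Sstar i)) * Tstar i = 0 := by
      rw [← h]; simp
    nlinarith
end

section
/- Let D ≥ 0, X ≥ 0, V ≥ 0, K > 0 and S̄ ≥ 0 be real numbers. Then the set C = {(S, T) ∈ ℝ × ℝ : S > 0, T ≥ 0, and D(S̄ − S) ≤ X · (V S/(K + S)) · T} is a convex subset of ℝ². -/
private lemma inv_convex_aux {S1 S2 a b : ℝ} (hS1 : 0 < S1) (hS2 : 0 < S2)
    (ha : 0 ≤ a) (hb : 0 ≤ b) (hab : a + b = 1) (hs : 0 < a * S1 + b * S2) :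
    (a * S1 + b * S2)⁻¹ ≤ a * S1⁻¹ + b * S2⁻¹ := by
  have hb' : b = 1 - a := by linarith
  subst hb'
  have h1 : a * S1⁻¹ + (1 - a) * S2⁻¹ = (a * S2 + (1 - a) * S1) / (S1 * S2) := by
    field_simp
  rw [h1, inv_eq_one_div, div_le_div_iff₀ hs (mul_pos hS1 hS2)]
  nlinarith [mul_nonneg (mul_nonneg ha hb) (sq_nonneg (S1 - S2)), mul_pos hS1 hS2]

private lemma constraint_iff_aux (D X V K Sbar S T : ℝ) (hK : 0 < K) (hS : 0 < S) :
    D * (Sbar - S) ≤ X * (V * S / (K + S)) * T ↔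
    D * (Sbar * K / S + Sbar - K - S) ≤ X * V * T := by
  have hKS : 0 < K + S := by linarith
  have e : Sbar * K / S + Sbar - K - S = (Sbar - S) * (K + S) / S := by
    field_simp; ring
  rw [show X * (V * S / (K + S)) * T = X * V * T * S / (K + S) by ring,
    le_div_iff₀ hKS, e,
    show D * ((Sbar - S) * (K + S) / S) = D * ((Sbar - S) * (K + S)) / S by ring,
    div_le_iff₀ hS]
  constructor <;> intro h <;> nlinarith [h]

/-- The importer constraint set
{(S, T) : S > 0, T ≥ 0, D(S̄ − S) ≤ X·(V S/(K+S))·T} is convex. -/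
theorem importer_constraint_set_convex
    (D X V K Sbar : ℝ) (hD : 0 ≤ D) (hX : 0 ≤ X) (hV : 0 ≤ V) (hK : 0 < K)
    (hSbar : 0 ≤ Sbar) :
    Convex ℝ {p : ℝ × ℝ | 0 < p.1 ∧ 0 ≤ p.2 ∧
      D * (Sbar - p.1) ≤ X * (V * p.1 / (K + p.1)) * p.2} := by
  rintro ⟨S1, T1⟩ ⟨hS1, hT1, h1⟩ ⟨S2, T2⟩ ⟨hS2, hT2, h2⟩ a b ha hb hab
  simp only [Set.mem_setOf_eq, Prod.fst_add, Prod.snd_add, Prod.smul_mk,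
    smul_eq_mul] at *
  have hs : 0 < a * S1 + b * S2 := by
    rcases eq_or_lt_of_le ha with h | h
    · have hb1 : b = 1 := by linarith
      simp [← h, hb1, hS2]
    · nlinarith [mul_nonneg hb hS2.le, mul_pos h hS1]
  refine ⟨hs, by positivity, ?_⟩
  rw [constraint_iff_aux D X V K Sbar _ _ hK hs]
  have h1' := (constraint_iff_aux D X V K Sbar _ _ hK hS1).mp h1
  have h2' := (constraint_iff_aux D X V K Sbar _ _ hK hS2).mp h2
  have hinv := inv_convex_aux hS1 hS2 ha hb hab hs
  have hSK : 0 ≤ Sbar * K := mul_nonneg hSbar hK.le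
  have hinv' := mul_le_mul_of_nonneg_left hinv hSK
  have key : Sbar * K / (a * S1 + b * S2) + Sbar - K - (a * S1 + b * S2) ≤
      a * (Sbar * K / S1 + Sbar - K - S1) + b * (Sbar * K / S2 + Sbar - K - S2) := by
    simp only [div_eq_mul_inv] at *
    nlinarith [hinv']
  have hkey := mul_le_mul_of_nonneg_left key hD
  nlinarith [mul_le_mul_of_nonneg_left h1' ha, mul_le_mul_of_nonneg_left h2' hb]
end

section
/- (Proposition 2.) Fix D > 0, X > 0, an integer n ≥ 1 and a subset I ⊆ {1,…,n} of imported-substrate indices with V_i > 0, K_i > 0 and S̄_i > 0 for i ∈ I. Fix integers m, p, N and matrices A ∈ ℝ^{m×(n+n+N)}, b ∈ ℝ^m, G ∈ ℝ^{p×(n+n+N)}, h ∈ ℝ^p encoding arbitrary affine equality and inequality constraints. Then the set of triples (S, T, w) ∈ ℝ^n × ℝ^n × ℝ^N such that (i) S_i > 0 for all i ∈ I, (ii) T_i ≥ 0 for all i, (iii) A·(S,T,w) ≤ b and G·(S,T,w) = h, and (iv) D(S̄_i − S_i) ≤ X (V_i S_i/(K_i + S_i)) T_i for all i ∈ I, is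 a convex subset of ℝ^{n+n+N}. -/
/-- Proposition 2: the RBA chemostat feasibility set is convex. The decision
vector x ∈ ℝ^{n+n+N} is indexed by `Fin n ⊕ Fin n ⊕ Fin N`, with
S i = x (inl i), T i = x (inr (inl i)) and w collecting the remaining
variables; A, b, G, h encode arbitrary affine constraints. -/
theorem rba_chemostat_feasible_set_convex
    (D X : ℝ) (hD : 0 < D) (hX : 0 < X)
    (n : ℕ) (hn : 1 ≤ n) (I : Set (Fin n))
    (V K Sbar : Fin n → ℝ)
    (hV : ∀ i ∈ I, 0 < V i) (hK : ∀ i ∈ I, 0 < K i)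
    (hSbar : ∀ i ∈ I, 0 < Sbar i)
    (m p N : ℕ)
    (A : Matrix (Fin m) (Fin n ⊕ Fin n ⊕ Fin N) ℝ) (b : Fin m → ℝ)
    (G : Matrix (Fin p) (Fin n ⊕ Fin n ⊕ Fin N) ℝ) (h : Fin p → ℝ) :
    Convex ℝ {x : (Fin n ⊕ Fin n ⊕ Fin N) → ℝ |
      (∀ i ∈ I, 0 < x (Sum.inl i)) ∧
      (∀ i : Fin n, 0 ≤ x (Sum.inr (Sum.inl i))) ∧
      (∀ j, A.mulVec x j ≤ b j) ∧
      (∀ j, G.mulVec x j = h j) ∧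
      (∀ i ∈ I, D * (Sbar i - x (Sum.inl i)) ≤
        X * (V i * x (Sum.inl i) / (K i + x (Sum.inl i))) *
          x (Sum.inr (Sum.inl i)))} := by
  rintro x ⟨hxS, hxT, hxA, hxG, hxM⟩ y ⟨hyS, hyT, hyA, hyG, hyM⟩ a c ha hc hac
  have hmem : ∀ u : (Fin n ⊕ Fin n ⊕ Fin N) → ℝ, ∀ v,
      (a • x + c • y) v = a * x v + c * y v := by
    intro u v; simp [Pi.add_apply, smul_eq_mul]
  refine ⟨?_, ?_, ?_, ?_, ?_⟩
  · intro i hi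
    have h1 := hxS i hi; have h2 := hyS i hi
    simp only [Pi.add_apply, Pi.smul_apply, smul_eq_mul]
    rcases eq_or_lt_of_le ha with h0 | h0
    · have hc1 : c = 1 := by linarith
      nlinarith
    · nlinarith [mul_nonneg hc h2.le]
  · intro i
    have h1 := hxT i; have h2 := hyT i
    simp only [Pi.add_apply, Pi.smul_apply, smul_eq_mul]
    nlinarith [mul_nonneg ha h1, mul_nonneg hc h2]
  · intro j
    have : A.mulVec (a • x + c • y) j = a * A.mulVec x j + c * A.mulVec y j := by
      simp [Matrix.mulVec_add, Matrix.mulVec_smul, smul_eq_mul]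
    rw [this]
    have hb : a * b j + c * b j = b j := by rw [← add_mul, hac, one_mul]
    linarith [mul_le_mul_of_nonneg_left (hxA j) ha,
      mul_le_mul_of_nonneg_left (hyA j) hc]
  · intro j
    have : G.mulVec (a • x + c • y) j = a * G.mulVec x j + c * G.mulVec y j := by
      simp [Matrix.mulVec_add, Matrix.mulVec_smul, smul_eq_mul]
    rw [this, hxG j, hyG j, ← add_mul, hac, one_mul]
  · intro i hi
    have hKi := hK i hi; have hVi := hV i hi; have hSb := hSbar i hi
    set s1 := x (Sum.inl i) with hs1def
    set s2 := y (Sum.inl i) with hs2def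
    set t1 := x (Sum.inr (Sum.inl i)) with ht1def
    set t2 := y (Sum.inr (Sum.inl i)) with ht2def
    have hs1 := hxS i hi; have hs2 := hyS i hi
    have ht1 := hxT i; have ht2 := hyT i
    simp only [Pi.add_apply, Pi.smul_apply, smul_eq_mul]
    have hK1 : (0:ℝ) < K i + s1 := by positivity
    have hK2 : (0:ℝ) < K i + s2 := by positivity
    set s : ℝ := a * s1 + c * s2 with hsdef
    set t : ℝ := a * t1 + c * t2 with htdef
    have hs : (0:ℝ) < s := by
      rcases eq_or_lt_of_le ha with h0 | h0
      · have hc1 : c = 1 := by linarith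
        simp [hsdef, ← h0, hc1]; linarith
      · have : 0 ≤ c * s2 := mul_nonneg hc hs2.le
        nlinarith
    have hKs : (0:ℝ) < K i + s := by positivity
    have P1 : D * (Sbar i - s1) * (K i + s1) ≤ X * V i * s1 * t1 := by
      have hM := hxM i hi
      rw [show X * (V i * s1 / (K i + s1)) * t1
          = (X * V i * s1 * t1) / (K i + s1) by ring, le_div_iff₀ hK1] at hM
      linarith
    have P2 : D * (Sbar i - s2) * (K i + s2) ≤ X * V i * s2 * t2 := by
      have hM := hyM i hi
      rw [show X * (V i * s2 / (K i + s2)) * t2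
          = (X * V i * s2 * t2) / (K i + s2) by ring, le_div_iff₀ hK2] at hM
      linarith
    rw [show X * (V i * s / (K i + s)) * t
        = (X * V i * s * t) / (K i + s) by ring, le_div_iff₀ hKs]
    have key : D * (Sbar i - s) * (K i + s) * (s1 * s2) ≤ X * V i * s * t * (s1 * s2) := by
      have H1 : 0 ≤ a * s2 * s * (X * V i * s1 * t1 - D * (Sbar i - s1) * (K i + s1)) :=
        mul_nonneg (by positivity) (by linarith)
      have H2 : 0 ≤ c * s1 * s * (X * V i * s2 * t2 - D * (Sbar i - s2) * (K i + s2)) :=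
        mul_nonneg (by positivity) (by linarith)
      have H3 : 0 ≤ D * Sbar i * K i * (a * c) * (s1 - s2) ^ 2 := by positivity
      have hid : X * V i * s * t * (s1 * s2) - D * (Sbar i - s) * (K i + s) * (s1 * s2)
          = a * s2 * s * (X * V i * s1 * t1 - D * (Sbar i - s1) * (K i + s1))
            + c * s1 * s * (X * V i * s2 * t2 - D * (Sbar i - s2) * (K i + s2))
            + D * Sbar i * K i * (a * c) * (s1 - s2) ^ 2 := by
        have hac' : c = 1 - a := by linarith
        subst hac'
        simp only [hsdef, htdef]
        ring
      linarith
    have hpos : (0:ℝ) < s1 * s2 := mul_pos hs1 hs2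
    exact le_of_mul_le_mul_right key hpos
end

section
/- (Core construction in part (ii) of Proposition 3.) Let D > 0, let n ≥ 1, let {1,…,n} be partitioned into a set I of imported substrates and a set E of exported substrates, and let S̄ ∈ ℝ^n with S̄_i ≥ 0 for all i. Let X* ≥ 0, S* ∈ ℝ^n with S*_i ≥ 0, T ∈ ℝ^n with T_i ≥ 0, ν ∈ ℝ^n, and V_i > 0, K_i > 0 for i ∈ I. Assume: for every i ∈ {1,…,n}, D(S̄_i − S*_i) = X* ν_i; for every i ∈ I, 0 ≤ D(S̄_i − S*_i) ≤ X* (V_i S*_i/(K_i + S*_i)) T_i; and for every i ∈ E, ν_i ≤ 0. Then for every real X with 0 ≤ X ≤ X*, the vector S ∈ ℝ^n defined by S_i = S̄_i − (X/D) ν_i satisfies: (a) D(S̄_i − S_i) = X ν_i for all i; (b) S_i ≥ S*_i ≥ 0 for all i ∈ I; (c) S_i ≥ S̄_i ≥ 0 for all i ∈ E; and (d) 0 ≤ D(S̄_i − S_i) ≤ X (V_i S_i/(K_i + S_i)) T_i for all i ∈ I. -/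
/-! Keeping the exchange fluxes ν and lowering the population from X* to X moves every
medium concentration by (X* − X) ν_i / D. Imported substrates have ν_i ≥ 0, so their
concentrations rise, which only increases the Michaelis–Menten efficiency of their
transporters; exported substrates have ν_i ≤ 0, so their concentrations stay above S̄_i.
The flux bound X* ν_i ≤ X* (V_i S*_i/(K_i + S*_i)) T_i then scales down to X. -/

open Set

theorem mul_le_mul_of_le_of_mul_le_mul {α : Type*} [Semiring α] [LinearOrder α]
    [IsStrictOrderedRing α] {x y a b : α} (hx : 0 ≤ x) (hxy : x ≤ y) (h : y * a ≤ y * b) :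
    x * a ≤ x * b := by
  rcases hx.eq_or_lt with rfl | hx_pos
  · simp
  · exact mul_le_mul_of_nonneg_left (le_of_mul_le_mul_left h (hx_pos.trans_le hxy)) hx

theorem mul_nonneg_of_le_of_mul_nonneg {α : Type*} [Semiring α] [LinearOrder α]
    [IsStrictOrderedRing α] {x y b : α} (hx : 0 ≤ x) (hxy : x ≤ y) (h : 0 ≤ y * b) :
    0 ≤ x * b := by
  simpa using mul_le_mul_of_le_of_mul_le_mul hx hxy (a := 0) (by simpa using h)

theorem michaelisMenten_monotoneOn {V K : ℝ} (hV : 0 ≤ V) (hK : 0 < K) :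
    MonotoneOn (fun s => V * s / (K + s)) (Ici 0) := by
  intro s hs t ht hst
  rw [mem_Ici] at hs ht
  rw [div_le_div_iff₀ (by linarith) (by linarith)]
  nlinarith [mul_le_mul_of_nonneg_left hst (mul_nonneg hV hK.le)]

section Chemostat

variable {D X Xstar sbar sstar ν : ℝ}

theorem chemostat_flux_of_scaled (hD : D ≠ 0) : D * (sbar - (sbar - X / D * ν)) = X * ν := by
  field_simp
  ring

theorem chemostat_le_scaled_of_flux_nonneg (hD : 0 < D)
    (heq : D * (sbar - sstar) = Xstar * ν) (hflux : 0 ≤ Xstar * ν)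
    (hX0 : 0 ≤ X) (hXle : X ≤ Xstar) : sstar ≤ sbar - X / D * ν := by
  have hgap : 0 ≤ (Xstar - X) * ν :=
    mul_nonneg_of_le_of_mul_nonneg (sub_nonneg.2 hXle) (sub_le_self _ hX0) hflux
  have hdiff : sbar - X / D * ν - sstar = (Xstar - X) * ν / D := by
    field_simp
    linarith
  linarith [div_nonneg hgap hD.le]

theorem chemostat_le_scaled_of_nonpos (hD : 0 < D) (hX0 : 0 ≤ X) (hν : ν ≤ 0) :
    sbar ≤ sbar - X / D * ν :=
  le_sub_self_iff _ |>.2 (mul_nonpos_of_nonneg_of_nonpos (div_nonneg hX0 hD.le) hν)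

end Chemostat

theorem chemostat_rba_scale_down_construction_general
    (D : ℝ) (hD : 0 < D) (n : ℕ)
    (I E : Set (Fin n))
    (Sbar Sstar T ν V K : Fin n → ℝ) (Xstar : ℝ)
    (hSbar : ∀ i, 0 ≤ Sbar i) (hSstar : ∀ i, 0 ≤ Sstar i)
    (hT : ∀ i, 0 ≤ T i)
    (hV : ∀ i ∈ I, 0 < V i) (hK : ∀ i ∈ I, 0 < K i)
    (heq : ∀ i, D * (Sbar i - Sstar i) = Xstar * ν i)
    (himp : ∀ i ∈ I, 0 ≤ D * (Sbar i - Sstar i) ∧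
      D * (Sbar i - Sstar i) ≤ Xstar * (V i * Sstar i / (K i + Sstar i)) * T i)
    (hexp : ∀ i ∈ E, ν i ≤ 0)
    (X : ℝ) (hX0 : 0 ≤ X) (hXle : X ≤ Xstar) :
    let S : Fin n → ℝ := fun i => Sbar i - (X / D) * ν i
    (∀ i, D * (Sbar i - S i) = X * ν i) ∧
    (∀ i ∈ I, Sstar i ≤ S i ∧ 0 ≤ Sstar i) ∧
    (∀ i ∈ E, Sbar i ≤ S i ∧ 0 ≤ Sbar i) ∧
    (∀ i ∈ I, 0 ≤ D * (Sbar i - S i) ∧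
      D * (Sbar i - S i) ≤ X * (V i * S i / (K i + S i)) * T i) := by
  intro S
  have hflux (i : Fin n) : D * (Sbar i - S i) = X * ν i := chemostat_flux_of_scaled hD.ne'
  have himp' (i : Fin n) (hi : i ∈ I) :
      0 ≤ Xstar * ν i ∧ Xstar * ν i ≤ Xstar * (V i * Sstar i / (K i + Sstar i) * T i) := by
    rw [← heq i, ← mul_assoc]
    exact himp i hi
  have hSstar_le (i : Fin n) (hi : i ∈ I) : Sstar i ≤ S i :=
    chemostat_le_scaled_of_flux_nonneg hD (heq i) (himp' i hi).1 hX0 hXle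
  refine ⟨hflux, fun i hi => ⟨hSstar_le i hi, hSstar i⟩,
    fun i hi => ⟨chemostat_le_scaled_of_nonpos hD hX0 (hexp i hi), hSbar i⟩, fun i hi => ?_⟩
  rw [hflux i]
  have hmono : V i * Sstar i / (K i + Sstar i) ≤ V i * S i / (K i + S i) :=
    michaelisMenten_monotoneOn (hV i hi).le (hK i hi) (hSstar i)
      ((hSstar i).trans (hSstar_le i hi)) (hSstar_le i hi)
  refine ⟨mul_nonneg_of_le_of_mul_nonneg hX0 hXle (himp' i hi).1, ?_⟩
  calc X * ν i ≤ X * (V i * Sstar i / (K i + Sstar i) * T i) :=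
        mul_le_mul_of_le_of_mul_le_mul hX0 hXle (himp' i hi).2
    _ ≤ X * (V i * S i / (K i + S i)) * T i := by
        rw [mul_assoc]; gcongr; exact hT i

/-- Core construction in part (ii) of Proposition 3: given a solution at
population X*, the medium concentrations S defined by
S_i = S̄_i − (X/D) ν_i yield a solution at any population 0 ≤ X ≤ X*. -/
theorem chemostat_rba_scale_down_construction
    (D : ℝ) (hD : 0 < D) (n : ℕ) (hn : 1 ≤ n)
    (I E : Set (Fin n)) (hunion : I ∪ E = Set.univ) (hdisj : I ∩ E = ∅)
    (Sbar Sstar T ν V K : Fin n → ℝ) (Xstar : ℝ) (hXstar : 0 ≤ Xstar)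
    (hSbar : ∀ i, 0 ≤ Sbar i) (hSstar : ∀ i, 0 ≤ Sstar i)
    (hT : ∀ i, 0 ≤ T i)
    (hV : ∀ i ∈ I, 0 < V i) (hK : ∀ i ∈ I, 0 < K i)
    (heq : ∀ i, D * (Sbar i - Sstar i) = Xstar * ν i)
    (himp : ∀ i ∈ I, 0 ≤ D * (Sbar i - Sstar i) ∧
      D * (Sbar i - Sstar i) ≤ Xstar * (V i * Sstar i / (K i + Sstar i)) * T i)
    (hexp : ∀ i ∈ E, ν i ≤ 0)
    (X : ℝ) (hX0 : 0 ≤ X) (hXle : X ≤ Xstar) :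
    let S : Fin n → ℝ := fun i => Sbar i - (X / D) * ν i
    (∀ i, D * (Sbar i - S i) = X * ν i) ∧
    (∀ i ∈ I, Sstar i ≤ S i ∧ 0 ≤ Sstar i) ∧
    (∀ i ∈ E, Sbar i ≤ S i ∧ 0 ≤ Sbar i) ∧
    (∀ i ∈ I, 0 ≤ D * (Sbar i - S i) ∧
      D * (Sbar i - S i) ≤ X * (V i * S i / (K i + S i)) * T i) :=
  chemostat_rba_scale_down_construction_general D hD n I E Sbar Sstar T ν V K Xstar hSbar hSstar hT
    hV hK heq himp hexp X hX0 hXle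
end
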